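/- arXiv:math/0108063 — 3 statements merged into one kernel-verified Lean document; each statement's English description precedes it below -/
import Mathlib

section
/- The norms of the spectral projections P_n, given by ‖P_n‖ = ‖f_n‖·‖g_n‖ / |⟨f_n, g_n⟩|, diverge at an exponential rate as n → +∞: precisely, the sequence q_n := ‖f_n‖·‖g_n‖ / |⟨f_n, g_n⟩| satisfies lim_{n→+∞} q_n · (2πsn/√(s² + t²)) · e^{−πsn/t} = 1; in particular q_n → ∞ as n → +∞. -/
open Complex ComplexConjugate Filter

lemma intExpAux (c : ℝ) (hc : c ≠ 0) :
    ∫ x in (0:ℝ)..Real.pi, Real.exp (c*x) = (Real.exp (c*Real.pi) - 1)/c := by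
  rw [intervalIntegral.integral_comp_mul_left (fun y => Real.exp y) hc]
  simp [integral_exp, smul_eq_mul]
  ring

lemma innerAux (u : ℂ) (hu0 : u ≠ 0) (hcu0 : conj u ≠ 0) (r : ℝ) (x : ℝ) :
    Complex.exp (x * (r:ℂ) / u) * conj (u * Complex.exp (-(x * (r:ℂ)) / conj u))
    + Complex.exp (x * (r:ℂ) / conj u) * conj (-(conj u) * Complex.exp (-(x * (r:ℂ)) / u))
    = conj u - u := by
  simp only [map_mul, ← Complex.exp_conj, map_div₀, map_neg, Complex.conj_conj,
    Complex.conj_ofReal]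
  rw [show cexp (↑x * ↑r / u) * ((starRingEnd ℂ) u * cexp (-(↑x * ↑r) / u))
      = conj u * (cexp (↑x * ↑r / u) * cexp (-(↑x * ↑r) / u)) by ring,
    show cexp (↑x * ↑r / conj u) * (-u * cexp (-(↑x * ↑r) / conj u))
      = -u * (cexp (↑x * ↑r / conj u) * cexp (-(↑x * ↑r) / conj u)) by ring,
    ← Complex.exp_add, ← Complex.exp_add,
    show (x:ℂ) * r / u + -((x:ℂ)*r)/u = 0 by field_simp; ring,
    show (x:ℂ) * r / conj u + -((x:ℂ)*r)/conj u = 0 by field_simp; ring]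
  simp
  ring

/-- The norms of the spectral projections,
`q_n = ‖f_n‖ ‖g_n‖ / |⟨f_n, g_n⟩|`, diverge exponentially:
`q_n · (2πsn/√(s²+t²)) · e^{−πsn/t} → 1`, and in particular `q_n → ∞`. -/
theorem projection_norms_diverge
    (s t : ℝ) (hs : 0 < s) (ht : 0 < t) (u : ℂ) (hu : u = s + t * Complex.I)
    (lam : ℤ → ℂ) (hlam : ∀ n : ℤ, lam n = (((s ^ 2 + t ^ 2) * n / t : ℝ) : ℂ))
    (f g : ℤ → ℝ → Fin 2 → ℂ)
    (hf : ∀ n x, f n x = ![Complex.exp (x * lam n / u),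
      Complex.exp (x * lam n / conj u)])
    (hg : ∀ n x, g n x = ![u * Complex.exp (-(x * lam n) / conj u),
      -(conj u) * Complex.exp (-(x * lam n) / u)])
    (q : ℤ → ℝ)
    (hq : ∀ n, q n =
      Real.sqrt (∫ x in (0:ℝ)..Real.pi,
          (‖f n x 0‖ ^ 2 + ‖f n x 1‖ ^ 2)) *
        Real.sqrt (∫ x in (0:ℝ)..Real.pi,
          (‖g n x 0‖ ^ 2 + ‖g n x 1‖ ^ 2)) /
        ‖∫ x in (0:ℝ)..Real.pi,
          (f n x 0 * conj (g n x 0) + f n x 1 * conj (g n x 1))‖) :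
    Tendsto (fun n : ℕ => q n * (2 * Real.pi * s * n / Real.sqrt (s ^ 2 + t ^ 2)) *
      Real.exp (-(Real.pi * s * n) / t)) atTop (nhds 1) ∧
    Tendsto (fun n : ℕ => q n) atTop atTop := by
  have ht0 : (t:ℝ) ≠ 0 := ht.ne'
  have htc0 : (t:ℂ) ≠ 0 := by exact_mod_cast ht.ne'
  have hu0 : u ≠ 0 := by
    rw [hu]; intro h
    have := congrArg Complex.im h
    simp at this; exact ht.ne' this
  have hcu : conj u = (s:ℂ) - t*Complex.I := by
    rw [hu, map_add, map_mul, Complex.conj_ofReal, Complex.conj_ofReal, Complex.conj_I]; ring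
  have hcu0 : conj u ≠ 0 := by
    rw [hcu]; intro h
    have := congrArg Complex.im h
    simp at this; exact ht.ne' this
  have habsu : ‖u‖ = Real.sqrt (s^2+t^2) := by
    rw [hu, Complex.norm_def, Complex.normSq_apply]
    simp
    ring_nf
  have hS : (0:ℝ) < s^2+t^2 := by positivity
  have hSpos : 0 < Real.sqrt (s^2+t^2) := Real.sqrt_pos.2 hS
  -- key exact value of q n
  have hkey : ∀ n : ℕ, 1 ≤ n → q (n:ℤ) =
      Real.sqrt (s^2+t^2) *
        ((Real.exp (s*(n:ℝ)/t*Real.pi) - Real.exp (-(s*(n:ℝ)/t*Real.pi)))/(s*(n:ℝ)/t)) /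
        (2*Real.pi*t) := by
    intro n hn
    have hnpos : (0:ℝ) < n := by exact_mod_cast hn
    set a : ℝ := s*(n:ℝ)/t with haa
    clear_value a
    have ha : 0 < a := by rw [haa]; positivity
    have hlu : lam (n:ℤ) / u = ((a : ℝ):ℂ) - (n:ℂ)*Complex.I := by
      rw [div_eq_iff hu0, hu, hlam, haa]
      push_cast
      field_simp
      ring_nf
      rw [Complex.I_sq]
      ring
    have hlcu : lam (n:ℤ) / conj u = ((a : ℝ):ℂ) + (n:ℂ)*Complex.I := by
      rw [div_eq_iff hcu0, hcu, hlam, haa]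
      push_cast
      field_simp
      ring_nf
      rw [Complex.I_sq]
      ring
    have habsf0 : ∀ x:ℝ, ‖f (n:ℤ) x 0‖ = Real.exp (a*x) := by
      intro x
      rw [hf]
      simp only [Matrix.cons_val_zero]
      rw [mul_div_assoc, hlu, Complex.norm_exp]
      congr 1
      simp [Complex.mul_re]
      ring
    have habsf1 : ∀ x:ℝ, ‖f (n:ℤ) x 1‖ = Real.exp (a*x) := by
      intro x
      rw [hf]
      simp only [Matrix.cons_val_one, Matrix.head_cons, Matrix.cons_val_zero]
      rw [mul_div_assoc, hlcu, Complex.norm_exp]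
      congr 1
      simp [Complex.mul_re]
      ring
    have habsg0 : ∀ x:ℝ, ‖g (n:ℤ) x 0‖ =
        Real.sqrt (s^2+t^2) * Real.exp (-(a*x)) := by
      intro x
      rw [hg]
      simp only [Matrix.cons_val_zero]
      rw [norm_mul, habsu, neg_div, mul_div_assoc, hlcu, Complex.norm_exp]
      congr 2
      simp [Complex.mul_re]
      ring
    have habsg1 : ∀ x:ℝ, ‖g (n:ℤ) x 1‖ =
        Real.sqrt (s^2+t^2) * Real.exp (-(a*x)) := by
      intro x
      rw [hg]
      simp only [Matrix.cons_val_one, Matrix.head_cons, Matrix.cons_val_zero]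
      rw [norm_mul, norm_neg, Complex.norm_conj, habsu,
        neg_div, mul_div_assoc, hlu, Complex.norm_exp]
      congr 2
      simp [Complex.mul_re]
      ring
    have hA : (∫ x in (0:ℝ)..Real.pi,
        (‖f (n:ℤ) x 0‖ ^ 2 + ‖f (n:ℤ) x 1‖ ^ 2)) =
        (Real.exp (2*a*Real.pi) - 1)/a := by
      rw [intervalIntegral.integral_congr (g := fun x => 2*Real.exp ((2*a)*x))
        (fun x _ => by rw [habsf0, habsf1, sq, ← Real.exp_add]; ring_nf)]
      rw [intervalIntegral.integral_const_mul, intExpAux _ (by positivity)]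
      field_simp
    have hB : (∫ x in (0:ℝ)..Real.pi,
        (‖g (n:ℤ) x 0‖ ^ 2 + ‖g (n:ℤ) x 1‖ ^ 2)) =
        (s^2+t^2) * (1 - Real.exp (-(2*a)*Real.pi))/a := by
      rw [intervalIntegral.integral_congr
        (g := fun x => (2*(s^2+t^2))*Real.exp ((-(2*a))*x))
        (fun x _ => by
          simp only [habsg0, habsg1, mul_pow, Real.sq_sqrt hS.le]
          rw [show Real.exp (-(a*x))^2 = Real.exp (-(2*a)*x) by
            rw [sq, ← Real.exp_add]; ring_nf]
          ring)]
      rw [intervalIntegral.integral_const_mul, intExpAux _ (neg_ne_zero.2 (by positivity))]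
      field_simp
      ring
    have hCval : (∫ x in (0:ℝ)..Real.pi,
        (f (n:ℤ) x 0 * conj (g (n:ℤ) x 0) + f (n:ℤ) x 1 * conj (g (n:ℤ) x 1))) =
        ((Real.pi:ℝ):ℂ) * (conj u - u) := by
      rw [intervalIntegral.integral_congr (g := fun _ => conj u - u)
        (fun x _ => by
          rw [hf, hg]
          simp only [Matrix.cons_val_zero, Matrix.cons_val_one, Matrix.head_cons]
          rw [hlam]
          exact innerAux u hu0 hcu0 _ x)]
      simp [Complex.real_smul]
      ring
    have hC : ‖∫ x in (0:ℝ)..Real.pi,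
        (f (n:ℤ) x 0 * conj (g (n:ℤ) x 0) + f (n:ℤ) x 1 * conj (g (n:ℤ) x 1))‖ =
        2*Real.pi*t := by
      rw [hCval, show conj u - u = ((-(2*t):ℝ):ℂ) * Complex.I by
        rw [hcu, hu]; push_cast; ring]
      rw [norm_mul, norm_mul, Complex.norm_real, Complex.norm_real, Real.norm_eq_abs,
        Real.norm_eq_abs, Complex.norm_I,
        mul_one, abs_of_pos Real.pi_pos, abs_neg, abs_of_pos (by positivity : (0:ℝ) < 2*t)]
      ring
    rw [hq, hA, hB, hC]
    set E := Real.exp (a*Real.pi) with hE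
    set E' := Real.exp (-(a*Real.pi)) with hE'
    have hEE' : E * E' = 1 := by rw [hE, hE', ← Real.exp_add]; simp
    have he1 : Real.exp (2*a*Real.pi) = E*E := by rw [hE, ← Real.exp_add]; ring_nf
    have he2 : Real.exp (-(2*a)*Real.pi) = E'*E' := by rw [hE', ← Real.exp_add]; ring_nf
    have hE'leE : E' ≤ E := Real.exp_le_exp.2 (by nlinarith [Real.pi_pos])
    have hEone : (1:ℝ) ≤ E := Real.one_le_exp (by positivity)
    rw [he1, he2]
    have hX : (0:ℝ) ≤ (E*E - 1)/a := by
      apply div_nonneg _ ha.le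
      nlinarith
    rw [← Real.sqrt_mul hX]
    have hXY : (E*E - 1)/a * ((s^2+t^2) * (1 - E'*E')/a) =
        (s^2+t^2) * ((E-E')/a)^2 := by
      field_simp
      linear_combination (-(E*E'-1)) * hEE'
    rw [hXY, Real.sqrt_mul hS.le, Real.sqrt_sq (div_nonneg (sub_nonneg.2 hE'leE) ha.le)]
  have hmain : ∀ n : ℕ, 1 ≤ n →
      q (n:ℤ) * (2 * Real.pi * s * n / Real.sqrt (s ^ 2 + t ^ 2)) *
        Real.exp (-(Real.pi * s * n) / t)
      = 1 - Real.exp (-((2*Real.pi*s/t) * n)) := by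
    intro n hn
    have hnpos : (0:ℝ) < n := by exact_mod_cast hn
    rw [hkey n hn]
    set a : ℝ := s*(n:ℝ)/t with haa
    have ha : 0 < a := by rw [haa]; positivity
    rw [show -(Real.pi*s*(n:ℝ))/t = -(a*Real.pi) by rw [haa]; ring,
      show -((2*Real.pi*s/t) * (n:ℝ)) = -(a*Real.pi) + -(a*Real.pi) by rw [haa]; ring,
      Real.exp_add,
      show 2*Real.pi*s*(n:ℝ) = 2*Real.pi*(a*t) by rw [haa]; field_simp]
    set E := Real.exp (a*Real.pi) with hE
    set E' := Real.exp (-(a*Real.pi)) with hE'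
    have hEE' : E * E' = 1 := by rw [hE, hE', ← Real.exp_add]; simp
    have h5 : Real.sqrt (s^2+t^2) * ((E-E')/a) / (2*Real.pi*t) *
        (2*Real.pi*(a*t)/Real.sqrt (s^2+t^2)) * E' = (E-E')*E' := by
      field_simp
    rw [h5]
    linear_combination hEE'
  have hc : (0:ℝ) < 2*Real.pi*s/t := by positivity
  have hlim0 : Tendsto (fun n:ℕ => Real.exp (-((2*Real.pi*s/t) * n))) atTop (nhds 0) := by
    apply Real.tendsto_exp_atBot.comp
    exact tendsto_neg_atTop_atBot.comp
      (Tendsto.const_mul_atTop hc tendsto_natCast_atTop_atTop)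
  have part1 : Tendsto (fun n : ℕ => q n *
      (2 * Real.pi * s * n / Real.sqrt (s ^ 2 + t ^ 2)) *
      Real.exp (-(Real.pi * s * n) / t)) atTop (nhds 1) := by
    have h1 : Tendsto (fun n:ℕ => 1 - Real.exp (-((2*Real.pi*s/t) * n))) atTop (nhds 1) := by
      simpa using tendsto_const_nhds.sub hlim0
    apply h1.congr'
    filter_upwards [eventually_ge_atTop 1] with n hn
    exact (hmain n hn).symm
  refine ⟨part1, ?_⟩
  have hb : (0:ℝ) < Real.pi*s/t := by positivity
  have hh0 : Tendsto (fun n:ℕ => 2*Real.pi*s*(n:ℝ)/Real.sqrt (s^2+t^2) *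
      Real.exp (-(Real.pi*s*n)/t)) atTop (nhds 0) := by
    have h1 : Tendsto (fun n:ℕ => (Real.pi*s/t)*(n:ℝ)) atTop atTop :=
      Tendsto.const_mul_atTop hb tendsto_natCast_atTop_atTop
    have h2 := (Real.tendsto_pow_mul_exp_neg_atTop_nhds_zero 1).comp h1
    have h3 := h2.const_mul (2*t/Real.sqrt (s^2+t^2))
    simp only [mul_zero] at h3
    apply h3.congr
    intro n
    show (2*t/Real.sqrt (s^2+t^2)) * ((Real.pi*s/t*(n:ℝ))^1 *
      Real.exp (-(Real.pi*s/t*(n:ℝ)))) = _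
    rw [pow_one, show -(Real.pi*s/t*(n:ℝ)) = -(Real.pi*s*(n:ℝ))/t by ring]
    field_simp
  have hhpos : ∀ᶠ n:ℕ in atTop, 2*Real.pi*s*(n:ℝ)/Real.sqrt (s^2+t^2) *
      Real.exp (-(Real.pi*s*n)/t) ∈ Set.Ioi (0:ℝ) := by
    filter_upwards [eventually_ge_atTop 1] with n hn
    have hnpos : (0:ℝ) < n := by exact_mod_cast hn
    have hexp := Real.exp_pos (-(Real.pi*s*n)/t)
    simp only [Set.mem_Ioi]
    positivity
  have hinv : Tendsto (fun n:ℕ => (2*Real.pi*s*(n:ℝ)/Real.sqrt (s^2+t^2) *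
      Real.exp (-(Real.pi*s*n)/t))⁻¹) atTop atTop :=
    tendsto_inv_nhdsGT_zero.comp
      (tendsto_nhdsWithin_of_tendsto_nhds_of_eventually_within _ hh0 hhpos)
  have part2 := part1.pos_mul_atTop one_pos hinv
  apply part2.congr'
  filter_upwards [eventually_ge_atTop 1] with n hn
  have hnpos : (0:ℝ) < n := by exact_mod_cast hn
  have hne : 2*Real.pi*s*(n:ℝ)/Real.sqrt (s^2+t^2) *
      Real.exp (-(Real.pi*s*n)/t) ≠ 0 := by
    have hexp := Real.exp_pos (-(Real.pi*s*n)/t)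
    positivity
  field_simp
end

section
/- For λ ∈ ℂ the following are equivalent: (i) there exists a pair of differentiable functions f₁, f₂ : [0,π] → ℂ, not both identically zero, such that u·f₁'(x) = λ·f₁(x) and conj(u)·f₂'(x) = λ·f₂(x) for all x ∈ [0,π], with the boundary conditions f₁(0) = f₂(0) and f₁(π) = f₂(π); (ii) λ = (s² + t²)·n/t for some n ∈ ℤ. -/
open Complex ComplexConjugate

private lemma expDeriv (c : ℂ) (x : ℝ) :
    HasDerivAt (fun y : ℝ => Complex.exp (c * y)) (Complex.exp (c * x) * c) x := by
  have h1 : HasDerivAt (fun y : ℝ => c * (y : ℂ)) c x := by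
    simpa using (Complex.ofRealCLM.hasDerivAt (x := x)).const_mul c
  simpa using h1.cexp

private lemma ode_solve (c : ℂ) (f : ℝ → ℂ)
    (hf : DifferentiableOn ℝ f (Set.Icc 0 Real.pi))
    (hode : ∀ x ∈ Set.Icc 0 Real.pi,
      derivWithin f (Set.Icc 0 Real.pi) x = c * f x) :
    ∀ x ∈ Set.Icc 0 Real.pi, f x = Complex.exp (c * x) * f 0 := by
  set g : ℝ → ℂ := fun x => Complex.exp (-c * x) * f x with hg
  have hgdiff : DifferentiableOn ℝ g (Set.Icc 0 Real.pi) :=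
    (Differentiable.differentiableOn (fun x => (expDeriv (-c) x).differentiableAt)).mul hf
  have hgderiv : ∀ x ∈ Set.Icc 0 Real.pi,
      HasDerivWithinAt g 0 (Set.Icc 0 Real.pi) x := by
    intro x hx
    have h1 := ((expDeriv (-c) x).hasDerivWithinAt (s := Set.Icc 0 Real.pi)).mul
      ((hf x hx).hasDerivWithinAt)
    rw [hode x hx] at h1
    have heq : Complex.exp (-c * ↑x) * -c * f x + Complex.exp (-c * ↑x) * (c * f x) = 0 := by
      ring
    rw [heq] at h1
    exact h1
  have hzero : ∀ x ∈ Set.Ico 0 Real.pi, derivWithin g (Set.Icc 0 Real.pi) x = 0 := by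
    intro x hx
    exact (hgderiv x (Set.Ico_subset_Icc_self hx)).derivWithin
      (uniqueDiffOn_Icc Real.pi_pos x (Set.Ico_subset_Icc_self hx))
  have hconst := constant_of_derivWithin_zero hgdiff hzero
  intro x hx
  have h0 := hconst x hx
  simp only [hg] at h0
  have hkey : Complex.exp (c * x) * (Complex.exp (-c * ↑x) * f x) = f x := by
    rw [← mul_assoc, ← Complex.exp_add]
    simp [show c * ↑x + -c * ↑x = 0 by ring]
  rw [← hkey, h0]
  simp

/-- `λ` is an eigenvalue of the system `u f₁′ = λ f₁`, `ū f₂′ = λ f₂` with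
boundary conditions `f₁(0) = f₂(0)`, `f₁(π) = f₂(π)` if and only if `λ = (s²+t²)n/t` for
some `n ∈ ℤ`. -/
theorem eigenvalue_iff
    (s t : ℝ) (hs : 0 < s) (ht : 0 < t) (u : ℂ) (hu : u = s + t * Complex.I)
    (lam : ℂ) :
    (∃ f₁ f₂ : ℝ → ℂ,
        DifferentiableOn ℝ f₁ (Set.Icc 0 Real.pi) ∧
        DifferentiableOn ℝ f₂ (Set.Icc 0 Real.pi) ∧
        (∀ x ∈ Set.Icc 0 Real.pi,
          u * derivWithin f₁ (Set.Icc 0 Real.pi) x = lam * f₁ x) ∧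
        (∀ x ∈ Set.Icc 0 Real.pi,
          conj u * derivWithin f₂ (Set.Icc 0 Real.pi) x = lam * f₂ x) ∧
        f₁ 0 = f₂ 0 ∧ f₁ Real.pi = f₂ Real.pi ∧
        ¬(∀ x ∈ Set.Icc 0 Real.pi, f₁ x = 0 ∧ f₂ x = 0)) ↔
      ∃ n : ℤ, lam = (((s ^ 2 + t ^ 2) * n / t : ℝ) : ℂ) := by
  have ht0 : (t : ℂ) ≠ 0 := Complex.ofReal_ne_zero.mpr ht.ne'
  have hpi0 : (Real.pi : ℂ) ≠ 0 := Complex.ofReal_ne_zero.mpr Real.pi_ne_zero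
  have hconj : conj u = (s : ℂ) - t * Complex.I := by
    rw [hu]; simp [Complex.conj_ofReal]; ring
  have hu0 : u ≠ 0 := by
    rw [hu]; intro h
    have := congrArg Complex.re h
    simp at this
    exact hs.ne' this
  have hcu0 : conj u ≠ 0 := by
    rw [hconj]; intro h
    have := congrArg Complex.re h
    simp at this
    exact hs.ne' this
  have hsq0 : ((s : ℂ) ^ 2 + (t : ℂ) ^ 2) ≠ 0 := by
    intro h
    have h2 : ((s ^ 2 + t ^ 2 : ℝ) : ℂ) = 0 := by push_cast; exact h
    rw [Complex.ofReal_eq_zero] at h2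
    nlinarith [sq_nonneg s, sq_nonneg t]
  have hmul : u * conj u = (s : ℂ) ^ 2 + (t : ℂ) ^ 2 := by
    rw [hconj, hu]; ring_nf; rw [Complex.I_sq]; ring
  have hdiff : lam / u - lam / conj u =
      lam * (-(2 * t * Complex.I)) / ((s : ℂ) ^ 2 + (t : ℂ) ^ 2) := by
    rw [div_sub_div _ _ hu0 hcu0, hmul]
    congr 1
    rw [hconj, hu]; ring
  have hipi : Real.pi ∈ Set.Icc 0 Real.pi := ⟨Real.pi_pos.le, le_refl _⟩
  have hi0 : (0 : ℝ) ∈ Set.Icc 0 Real.pi := ⟨le_refl _, Real.pi_pos.le⟩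
  constructor
  · rintro ⟨f₁, f₂, hd₁, hd₂, hode₁, hode₂, hb0, hbpi, hnt⟩
    have hf₁ := ode_solve (lam / u) f₁ hd₁ (fun x hx => by
      have h := hode₁ x hx
      field_simp
      linear_combination h)
    have hf₂ := ode_solve (lam / conj u) f₂ hd₂ (fun x hx => by
      have h := hode₂ x hx
      field_simp
      linear_combination h)
    -- nontriviality: f₁ 0 ≠ 0
    have ha : f₁ 0 ≠ 0 := by
      intro ha
      apply hnt
      intro x hx
      constructor
      · rw [hf₁ x hx, ha, mul_zero]
      · rw [hf₂ x hx, ← hb0, ha, mul_zero]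
    have hexp : Complex.exp (lam / u * Real.pi) = Complex.exp (lam / conj u * Real.pi) := by
      have h1 := hf₁ Real.pi hipi
      have h2 := hf₂ Real.pi hipi
      rw [h1, h2, ← hb0] at hbpi
      exact mul_right_cancel₀ ha hbpi
    have hone : Complex.exp ((lam / u - lam / conj u) * Real.pi) = 1 := by
      rw [sub_mul, Complex.exp_sub, hexp, div_self (Complex.exp_ne_zero _)]
    rw [Complex.exp_eq_one_iff] at hone
    obtain ⟨n, hn⟩ := hone
    refine ⟨-n, ?_⟩
    rw [hdiff] at hn
    have h2pi : (2 * (Real.pi : ℂ) * Complex.I) ≠ 0 := by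
      simp [hpi0, Complex.I_ne_zero, Real.pi_ne_zero]
    field_simp at hn
    have h2 : (-(lam * t)) * (2 * (Real.pi : ℂ) * Complex.I) =
        ((n : ℂ) * ((s : ℂ) ^ 2 + (t : ℂ) ^ 2)) * (2 * (Real.pi : ℂ) * Complex.I) := by
      linear_combination (2 * (Real.pi : ℂ) * Complex.I) * hn
    have h3 := mul_right_cancel₀ h2pi h2
    push_cast
    rw [eq_div_iff ht0]
    linear_combination -h3
  · rintro ⟨n, hlam⟩
    refine ⟨fun x => Complex.exp (lam / u * x), fun x => Complex.exp (lam / conj u * x),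
      ?_, ?_, ?_, ?_, ?_, ?_, ?_⟩
    · exact Differentiable.differentiableOn (fun x => (expDeriv (lam / u) x).differentiableAt)
    · exact Differentiable.differentiableOn
        (fun x => (expDeriv (lam / conj u) x).differentiableAt)
    · intro x hx
      rw [((expDeriv (lam / u) x).hasDerivWithinAt.derivWithin
        (uniqueDiffOn_Icc Real.pi_pos x hx))]
      field_simp
    · intro x hx
      rw [((expDeriv (lam / conj u) x).hasDerivWithinAt.derivWithin
        (uniqueDiffOn_Icc Real.pi_pos x hx))]
      field_simp
    · simp
    · rw [Complex.exp_eq_exp_iff_exists_int]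
      refine ⟨-n, ?_⟩
      rw [show lam / u * ↑Real.pi = lam / conj u * ↑Real.pi + (lam / u - lam / conj u) * Real.pi
        by ring, hdiff, hlam]
      push_cast
      field_simp
    · intro h
      have := (h 0 hi0).1
      simp at this
end

section
/- Suppose c ∈ ℂⁿ is orthogonal to every vector of U and to every vector of V, and let z ∈ ℂ. Then for every twice continuously differentiable function f : [α,β] → ℂⁿ with f(α) ∈ U, f(β) ∈ U, f'(α) ∈ V and f'(β) ∈ V, one has ∫_α^β ⟨ −f''(x) − z²·f(x), c·exp(i·conj(z)·x) ⟩ dx = 0. (Thus, when c ≠ 0, the function g(x) = c·e^{i·conj(z)·x} is a nonzero element of L²((α,β),ℂⁿ) orthogonal to the range of Z − z²I, where Zf = −f'' with these boundary conditions, so that z² ∈ Spec(Z) for every z ∈ ℂ.) -/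
open Complex ComplexConjugate

/-- If `c ⊥ U` and `c ⊥ V`, then for every `C²` function `f` with `f(α), f(β) ∈ U`
and `f′(α), f′(β) ∈ V`, the function `g(x) = c e^{i z̄ x}` is orthogonal to
`(−f″ − z² f)`, i.e. `∫_α^β ⟨−f″(x) − z² f(x), c e^{i z̄ x}⟩ dx = 0`. -/
theorem orthogonal_to_range
    {n : ℕ} (hn : 1 ≤ n) (α β : ℝ) (hαβ : α < β)
    (U V : Submodule ℂ (Fin n → ℂ)) (c : Fin n → ℂ)
    (hcU : ∀ v ∈ U, (∑ i, c i * conj (v i)) = 0)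
    (hcV : ∀ v ∈ V, (∑ i, c i * conj (v i)) = 0)
    (z : ℂ) :
    ∀ f : ℝ → (Fin n → ℂ), ContDiffOn ℝ 2 f (Set.Icc α β) →
      f α ∈ U → f β ∈ U →
      derivWithin f (Set.Icc α β) α ∈ V → derivWithin f (Set.Icc α β) β ∈ V →
      (∫ x in α..β,
        ∑ i, (-(iteratedDerivWithin 2 f (Set.Icc α β) x i) - z ^ 2 * f x i) *
          conj (c i * Complex.exp (Complex.I * conj z * x))) = 0 := by
  intro f hf hfα hfβ hf'α hf'β
  have hs : UniqueDiffOn ℝ (Set.Icc α β) := uniqueDiffOn_Icc hαβ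
  set s : Set ℝ := Set.Icc α β with hsdef
  set f' : ℝ → Fin n → ℂ := derivWithin f s with hf'def
  set f'' : ℝ → Fin n → ℂ := derivWithin f' s with hf''def
  have hf1 : ContDiffOn ℝ 1 f' s := hf.derivWithin hs (by norm_num)
  have hiter : ∀ x ∈ s, iteratedDerivWithin 2 f s x = f'' x := by
    intro x hx
    rw [iteratedDerivWithin_succ]
    exact derivWithin_congr (fun y hy => congrFun iteratedDerivWithin_one y)
      (congrFun iteratedDerivWithin_one x)
  -- weight
  set w : ℝ → ℂ := fun x => Complex.exp (-(Complex.I * z * x)) with hwdef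
  have hw : ∀ x : ℝ, HasDerivAt w (-(Complex.I * z) * w x) x := by
    intro x
    have h1 : HasDerivAt (fun x : ℝ => -(Complex.I * z * (x : ℂ))) (-(Complex.I * z)) x := by
      simpa using ((Complex.ofRealCLM.hasDerivAt (x := x)).const_mul (Complex.I * z)).fun_neg
    exact h1.cexp.congr_deriv (mul_comm _ _)
  have hwc : Continuous w := by
    fun_prop
  set G : ℝ → ℂ := fun x => ∑ i, conj (c i) *
    (-(f' x i) * w x - Complex.I * z * f x i * w x) with hGdef
  set g : ℝ → ℂ := fun x =>
    ∑ i, (-(iteratedDerivWithin 2 f s x i) - z ^ 2 * f x i) *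
      conj (c i * Complex.exp (Complex.I * conj z * x)) with hgdef
  -- conj of the exponential is w
  have hconjw : ∀ x : ℝ, (starRingEnd ℂ) (Complex.exp (Complex.I * conj z * x)) = w x := by
    intro x
    rw [← Complex.exp_conj]
    simp only [hwdef, map_mul, Complex.conj_I, Complex.conj_conj, Complex.conj_ofReal]
    ring_nf
  -- componentwise derivatives at interior points
  have hmem : ∀ x ∈ Set.Ioo α β, s ∈ nhds x := fun x hx => Icc_mem_nhds hx.1 hx.2
  have hdf : ∀ x ∈ Set.Ioo α β, ∀ i, HasDerivAt (fun y => f y i) (f' x i) x := by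
    intro x hx i
    have h1 : HasDerivAt f (f' x) x :=
      ((hf.differentiableOn two_ne_zero x (Set.Ioo_subset_Icc_self hx)).hasDerivWithinAt).hasDerivAt
        (hmem x hx)
    exact hasDerivAt_pi.1 h1 i
  have hdf' : ∀ x ∈ Set.Ioo α β, ∀ i, HasDerivAt (fun y => f' y i) (f'' x i) x := by
    intro x hx i
    have h1 : HasDerivAt f' (f'' x) x :=
      ((hf1.differentiableOn one_ne_zero x (Set.Ioo_subset_Icc_self hx)).hasDerivWithinAt).hasDerivAt
        (hmem x hx)
    exact hasDerivAt_pi.1 h1 i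
  -- derivative of G is g on the interior
  have hG : ∀ x ∈ Set.Ioo α β, HasDerivAt G (g x) x := by
    intro x hx
    have h : HasDerivAt G (∑ i, conj (c i) *
        ((-(f'' x i) * w x + -(f' x i) * (-(Complex.I * z) * w x))
          - ((Complex.I * z * f' x i) * w x + (Complex.I * z * f x i) * (-(Complex.I * z) * w x)))) x := by
      apply HasDerivAt.fun_sum
      intro i _
      exact (((hdf' x hx i).neg.mul (hw x)).sub
        (((hdf x hx i).const_mul (Complex.I * z)).mul (hw x))).const_mul (conj (c i))
    refine h.congr_deriv ?_
    simp only [hgdef]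
    refine Finset.sum_congr rfl fun i _ => ?_
    rw [map_mul, hconjw x, hiter x (Set.Ioo_subset_Icc_self hx)]
    ring_nf
    simp only [Complex.I_sq]
    ring
  -- continuity of G on Icc
  have hfc : ContinuousOn f s := hf.continuousOn
  have hf'c : ContinuousOn f' s := hf1.continuousOn
  have hfci : ∀ i, ContinuousOn (fun y => f y i) s :=
    fun i => (continuous_apply i).comp_continuousOn hfc
  have hf'ci : ∀ i, ContinuousOn (fun y => f' y i) s :=
    fun i => (continuous_apply i).comp_continuousOn hf'c
  have h2 : ContinuousOn (iteratedDerivWithin 2 f s) s :=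
    hf.continuousOn_iteratedDerivWithin le_rfl hs
  have h2ci : ∀ i, ContinuousOn (fun y => iteratedDerivWithin 2 f s y i) s :=
    fun i => (continuous_apply i).comp_continuousOn h2
  have hGc : ContinuousOn G s := by
    apply continuousOn_finset_sum
    intro i _
    exact continuousOn_const.mul (((hf'ci i).neg.mul hwc.continuousOn).sub
      ((continuousOn_const.mul (hfci i)).mul hwc.continuousOn))
  have hconjc : ∀ i : Fin n, Continuous
      (fun y : ℝ => (starRingEnd ℂ) (c i * Complex.exp (Complex.I * conj z * y))) := by
    intro i
    apply Continuous.comp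
    · exact continuous_star
    · fun_prop
  have hgc : ContinuousOn g s := by
    apply continuousOn_finset_sum
    intro i _
    exact ((h2ci i).neg.sub (continuousOn_const.mul (hfci i))).mul (hconjc i).continuousOn
  have hgint : IntervalIntegrable g MeasureTheory.volume α β := by
    apply ContinuousOn.intervalIntegrable
    rwa [Set.uIcc_of_le hαβ.le]
  -- fundamental theorem of calculus
  have hFTC : (∫ x in α..β, g x) = G β - G α :=
    intervalIntegral.integral_eq_sub_of_hasDeriv_right_of_le hαβ.le hGc
      (fun x hx => (hG x hx).hasDerivWithinAt) hgint
  -- boundary values vanish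
  have hU' : ∀ v ∈ U, (∑ i, conj (c i) * v i) = 0 := by
    intro v hv
    have := congrArg (starRingEnd ℂ) (hcU v hv)
    simpa using this
  have hV' : ∀ v ∈ V, (∑ i, conj (c i) * v i) = 0 := by
    intro v hv
    have := congrArg (starRingEnd ℂ) (hcV v hv)
    simpa using this
  have hGval : ∀ y : ℝ, f y ∈ U → f' y ∈ V → G y = 0 := by
    intro y hyU hyV
    have : G y = (-(w y)) * (∑ i, conj (c i) * f' y i)
        + (-(Complex.I * z * w y)) * (∑ i, conj (c i) * f y i) := by
      simp only [hGdef, Finset.mul_sum, ← Finset.sum_add_distrib]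
      exact Finset.sum_congr rfl fun i _ => by ring
    rw [this, hV' _ hyV, hU' _ hyU]
    ring
  calc (∫ x in α..β, g x) = G β - G α := hFTC
    _ = 0 := by rw [hGval β hfβ hf'β, hGval α hfα hf'α]; ring
end
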